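/- Let ζ ∈ [0,1] and n ≥ 0, N = 2^(L-1)(2n+1), and define Q₁, Q₂ on {0,1}^L by Q₁(s) = (n + (1+ζ)/2)/N if s has even parity and (n + (1-ζ)/2)/N otherwise, with Q₂ defined with parities swapped. Then the Chernoff information C(Q₁,Q₂) = -log(∑_s √(Q₁(s)Q₂(s))) = -log(2^(L-1)·√((2n+1)² - ζ²)/N) = -log(√(1 - ε²)) where ε = 2^(L-1)·ζ/N. -/

import Mathlib

/-!
The pair is symmetric: flipping one coordinate of `s` swaps the parity classes and hence
`Q₁` with `Q₂`. Reindexing by that involution shows `∑ Q₁^λ Q₂^(1-λ) = ∑ Q₂^λ Q₁^(1-λ)`, and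
termwise AM-GM bounds the average of these two sums below by `∑ √(Q₁ Q₂)`, its value at
`λ = 1/2`. Since `Q₁ Q₂` and `Q₁ + Q₂` are constant, the remaining identities are arithmetic.
-/

open Finset

def evenParity {L : ℕ} (s : Fin L → Bool) : Prop :=
  Even (univ.filter (fun i => s i = true)).card

instance {L : ℕ} (s : Fin L → Bool) : Decidable (evenParity s) := by
  unfold evenParity; infer_instance

section SymmetricPair

variable {α : Type*} [Fintype α] {P Q : α → ℝ}

theorem Real.rpow_mul_rpow_one_sub {p : ℝ} (hp : 0 ≤ p) (l : ℝ) : p ^ l * p ^ (1 - l) = p := by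
  rw [← Real.rpow_add' hp (by norm_num), add_sub_cancel, Real.rpow_one]

theorem Real.two_mul_sqrt_mul_le_rpow_mul_rpow_add {p q : ℝ} (hp : 0 ≤ p) (hq : 0 ≤ q) (l : ℝ) :
    2 * √(p * q) ≤ p ^ l * q ^ (1 - l) + q ^ l * p ^ (1 - l) := by
  set u := p ^ l * q ^ (1 - l)
  set v := q ^ l * p ^ (1 - l)
  have huv : u * v = p * q := by
    calc u * v = (p ^ l * p ^ (1 - l)) * (q ^ l * q ^ (1 - l)) := by ring
      _ = p * q := by rw [Real.rpow_mul_rpow_one_sub hp, Real.rpow_mul_rpow_one_sub hq]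
  have hu : 0 ≤ u := by positivity
  have hv : 0 ≤ v := by positivity
  calc 2 * √(p * q) = 2 * √u * √v := by rw [← huv, Real.sqrt_mul hu, mul_assoc]
    _ ≤ √u ^ 2 + √v ^ 2 := two_mul_le_add_sq _ _
    _ = u + v := by rw [Real.sq_sqrt hu, Real.sq_sqrt hv]

theorem sum_rpow_mul_rpow_eq_swap (σ : Equiv.Perm α) (hPσ : ∀ x, P (σ x) = Q x)
    (hQσ : ∀ x, Q (σ x) = P x) (l : ℝ) :
    ∑ x, P x ^ l * Q x ^ (1 - l) = ∑ x, Q x ^ l * P x ^ (1 - l) := by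
  rw [← Equiv.sum_comp σ]
  simp only [hPσ, hQσ]

theorem sum_sqrt_mul_le_sum_rpow_mul_rpow (σ : Equiv.Perm α) (hPσ : ∀ x, P (σ x) = Q x)
    (hQσ : ∀ x, Q (σ x) = P x) (hP : ∀ x, 0 ≤ P x) (hQ : ∀ x, 0 ≤ Q x) (l : ℝ) :
    ∑ x, √(P x * Q x) ≤ ∑ x, P x ^ l * Q x ^ (1 - l) := by
  have h := sum_le_sum fun x (_ : x ∈ univ) =>
    Real.two_mul_sqrt_mul_le_rpow_mul_rpow_add (hP x) (hQ x) l
  rw [← mul_sum, sum_add_distrib, ← sum_rpow_mul_rpow_eq_swap σ hPσ hQσ] at h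
  linarith

theorem log_sum_rpow_mul_rpow_eq_zero {l : ℝ} (hl : l ∈ Set.Icc (0 : ℝ) 1)
    (hPQ : ∀ x, P x * Q x = 0) (hP1 : ∑ x, P x = 1) (hQ1 : ∑ x, Q x = 1) :
    Real.log (∑ x, P x ^ l * Q x ^ (1 - l)) = 0 := by
  rcases eq_or_lt_of_le hl.1 with rfl | hl₀
  · simp [hQ1]
  rcases eq_or_lt_of_le hl.2 with rfl | hl₁
  · simp [hP1]
  suffices ∀ x, P x ^ l * Q x ^ (1 - l) = 0 by simp [this]
  intro x
  rcases mul_eq_zero.mp (hPQ x) with h | h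
  · rw [h, Real.zero_rpow hl₀.ne', zero_mul]
  · rw [h, Real.zero_rpow (by linarith), mul_zero]

theorem isLeast_log_sum_rpow_mul_rpow (σ : Equiv.Perm α) (hPσ : ∀ x, P (σ x) = Q x)
    (hQσ : ∀ x, Q (σ x) = P x) (hP : ∀ x, 0 ≤ P x) (hQ : ∀ x, 0 ≤ Q x) (hP1 : ∑ x, P x = 1) :
    IsLeast ((fun l : ℝ => Real.log (∑ x, P x ^ l * Q x ^ (1 - l))) '' Set.Icc 0 1)
      (Real.log (∑ x, √(P x * Q x))) := by
  refine ⟨⟨1 / 2, by norm_num, ?_⟩, ?_⟩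
  · refine congrArg Real.log (sum_congr rfl fun x _ => ?_)
    rw [Real.sqrt_mul (hP x), Real.sqrt_eq_rpow, Real.sqrt_eq_rpow]
    norm_num
  rintro _ ⟨l, hl, rfl⟩
  rcases (sum_nonneg fun x (_ : x ∈ univ) => Real.sqrt_nonneg (P x * Q x)).eq_or_lt
    with hzero | hpos
  · -- disjoint supports: `log 0 = 0`, and the sum is `0` inside `(0, 1)` and `1` at the ends
    have hPQ : ∀ x, P x * Q x = 0 := fun x => by
      have := (sum_eq_zero_iff_of_nonneg fun x _ => Real.sqrt_nonneg _).mp hzero.symm x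
        (mem_univ x)
      rwa [Real.sqrt_eq_zero (mul_nonneg (hP x) (hQ x))] at this
    have hQ1 : ∑ x, Q x = 1 := by rw [← hP1, ← Equiv.sum_comp σ]; simp only [hQσ]
    rw [← hzero, Real.log_zero]
    exact (log_sum_rpow_mul_rpow_eq_zero hl hPQ hP1 hQ1).ge
  · exact Real.log_le_log hpos (sum_sqrt_mul_le_sum_rpow_mul_rpow σ hPσ hQσ hP hQ l)

section TwoLevel

variable (p : α → Prop) [DecidablePred p] {σ : Equiv.Perm α}

theorem sum_sqrt_ite_mul_ite (a b : ℝ) :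
    ∑ x, √((if p x then a else b) * (if p x then b else a)) = Fintype.card α * √(a * b) := by
  rw [← nsmul_eq_mul, ← card_univ, ← sum_const]
  exact sum_congr rfl fun x _ => by split_ifs <;> rw [mul_comm]

theorem sum_ite_of_swap (hσ : ∀ x, p (σ x) ↔ ¬ p x) (a b : ℝ) :
    ∑ x, (if p x then a else b) = Fintype.card α * (a + b) / 2 := by
  have hswap : ∑ x, (if p x then a else b) = ∑ x, (if p x then b else a) := by
    rw [← Equiv.sum_comp σ]
    simp only [hσ, ite_not]
  have hadd : ∑ x, ((if p x then a else b) + (if p x then b else a)) = ∑ _x : α, (a + b) :=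
    sum_congr rfl fun x _ => by split_ifs <;> ring
  rw [sum_add_distrib, ← hswap, sum_const, card_univ, nsmul_eq_mul] at hadd
  linarith

theorem isLeast_log_sum_rpow_ite (hσ : ∀ x, p (σ x) ↔ ¬ p x) {a b : ℝ} (ha : 0 ≤ a) (hb : 0 ≤ b)
    (hab : Fintype.card α * (a + b) = 2) :
    IsLeast ((fun l : ℝ => Real.log (∑ x, (if p x then a else b) ^ l *
        (if p x then b else a) ^ (1 - l))) '' Set.Icc 0 1)
      (Real.log (∑ x, √((if p x then a else b) * (if p x then b else a)))) := by
  refine isLeast_log_sum_rpow_mul_rpow σ (fun x => by simp [hσ]) (fun x => by simp [hσ])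
    (fun x => by split_ifs <;> assumption) (fun x => by split_ifs <;> assumption) ?_
  rw [sum_ite_of_swap p hσ, hab]
  norm_num

end TwoLevel

end SymmetricPair

def flipAt {ι : Type*} [DecidableEq ι] (i : ι) : Equiv.Perm (ι → Bool) :=
  Function.Involutive.toPerm (fun s => Function.update s i (!s i)) fun s => by simp

theorem flipAt_apply_self {ι : Type*} [DecidableEq ι] (i : ι) (s : ι → Bool) :
    flipAt i s i = !s i :=
  Function.update_self i _ s

theorem flipAt_apply_of_ne {ι : Type*} [DecidableEq ι] {i j : ι} (h : j ≠ i) (s : ι → Bool) :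
    flipAt i s j = s j :=
  Function.update_of_ne h _ s

theorem evenParity_flipAt {L : ℕ} (i : Fin L) (s : Fin L → Bool) :
    evenParity (flipAt i s) ↔ ¬ evenParity s := by
  have hrest : ∑ j ∈ {i}ᶜ, (if flipAt i s j = true then 1 else 0)
      = ∑ j ∈ {i}ᶜ, (if s j = true then 1 else 0) :=
    sum_congr rfl fun j hj => by rw [flipAt_apply_of_ne (by simpa using hj)]
  unfold evenParity
  rw [card_filter, card_filter, Fintype.sum_eq_add_sum_compl i, Fintype.sum_eq_add_sum_compl i,
    hrest, flipAt_apply_self]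
  cases s i <;> simp [parity_simps]

theorem card_fin_fun_bool {L : ℕ} (hL : 1 ≤ L) :
    (Fintype.card (Fin L → Bool) : ℝ) = 2 * 2 ^ (L - 1) := by
  rw [Fintype.card_fun, Fintype.card_bool, Fintype.card_fin, ← pow_succ', Nat.sub_add_cancel hL]
  push_cast; ring

theorem Real.sqrt_sq_sub_sq_div {c : ℝ} (hc : 0 < c) (z : ℝ) :
    √(c ^ 2 - z ^ 2) / c = √(1 - (z / c) ^ 2) := by
  rw [← Real.sqrt_sq hc.le, ← Real.sqrt_div' _ (sq_nonneg c), Real.sqrt_sq hc.le]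
  congr 1
  field_simp

theorem chernoff_noisy_closest_pair (L n : ℕ) (hL : 1 ≤ L)
    (N : ℕ) (hN : N = 2 ^ (L - 1) * (2 * n + 1))
    (ζ : ℝ) (hζ0 : 0 ≤ ζ) (hζ1 : ζ ≤ 1)
    (Q₁ Q₂ : (Fin L → Bool) → ℝ)
    (hQ₁ : ∀ s, Q₁ s = ((n : ℝ) + if evenParity s then (1 + ζ) / 2 else (1 - ζ) / 2) / N)
    (hQ₂ : ∀ s, Q₂ s = ((n : ℝ) + if evenParity s then (1 - ζ) / 2 else (1 + ζ) / 2) / N)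
    (ε : ℝ) (hε : ε = 2 ^ (L - 1) * ζ / N) :
    IsLeast
      ((fun l : ℝ => Real.log (∑ s, Q₁ s ^ l * Q₂ s ^ (1 - l))) '' Set.Icc 0 1)
      (Real.log (∑ s, Real.sqrt (Q₁ s * Q₂ s))) ∧
    (∑ s, Real.sqrt (Q₁ s * Q₂ s))
      = 2 ^ (L - 1) * Real.sqrt ((2 * n + 1 : ℝ) ^ 2 - ζ ^ 2) / N ∧
    2 ^ (L - 1) * Real.sqrt ((2 * n + 1 : ℝ) ^ 2 - ζ ^ 2) / N
      = Real.sqrt (1 - ε ^ 2) := by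
  have hNR : (N : ℝ) = 2 ^ (L - 1) * (2 * n + 1) := by rw [hN]; push_cast; ring
  have hc : (0 : ℝ) < 2 * n + 1 := by positivity
  have hNpos : (0 : ℝ) < N := by rw [hNR]; positivity
  set a := ((n : ℝ) + (1 + ζ) / 2) / N
  set b := ((n : ℝ) + (1 - ζ) / 2) / N
  obtain rfl : Q₁ = fun s => if evenParity s then a else b := funext fun s => by
    rw [hQ₁]; split_ifs <;> rfl
  obtain rfl : Q₂ = fun s => if evenParity s then b else a := funext fun s => by
    rw [hQ₂]; split_ifs <;> rfl
  have hsqrt : √(a * b) = √((2 * n + 1 : ℝ) ^ 2 - ζ ^ 2) / (2 * N) := by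
    have hab : a * b = ((2 * n + 1 : ℝ) ^ 2 - ζ ^ 2) / (2 * N) ^ 2 := by
      simp only [a, b]; field_simp; ring
    rw [hab, Real.sqrt_div' _ (sq_nonneg _), Real.sqrt_sq (by positivity)]
  have hsum : Fintype.card (Fin L → Bool) * (a + b) = 2 := by
    simp only [card_fin_fun_bool hL, a, b]; field_simp; rw [hNR]; ring
  have ha : 0 ≤ a := div_nonneg (by positivity) hNpos.le
  have hb : 0 ≤ b := div_nonneg (by linarith [(n.cast_nonneg : (0 : ℝ) ≤ n)]) hNpos.le
  refine ⟨isLeast_log_sum_rpow_ite _ (evenParity_flipAt ⟨0, hL⟩) ha hb hsum, ?_, ?_⟩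
  · rw [sum_sqrt_ite_mul_ite, card_fin_fun_bool hL, hsqrt]
    field_simp
  · have h2 : (2 : ℝ) ^ (L - 1) ≠ 0 := by positivity
    rw [hε, hNR, mul_div_mul_left _ _ h2, mul_div_mul_left _ _ h2, Real.sqrt_sq_sub_sq_div hc]
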